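/- With the setup of the linearisation (w solving w'' + p w' + q w = 0, W the Wronskian with a second solution w̃, z = w̃/w, g = w w'/W, d/dz = (w²/W) d/ds), one has g''' − 12 g g'' − 6 (g')² + 48 g² g' − 24 g⁴ = −(q'' + 2 p' q + 5 q' p + 6 p² q) w⁸ / W⁴. -/

import Mathlib

/-!
Abel's identity `W' = -p W` makes differentiation preserve the shape `N / W ^ k`: the derivative
of `N / W ^ k` is `(N' + k p N) / W ^ k`, so `d/dz = (w² / W) d/ds` sends it to
`w² (N' + k p N) / W ^ (k + 1)`. Starting from `g = w w' / W` and eliminating `w''` with the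
equation after each step, `g'`, `g''`, `g'''` are `N / W ^ k` with `N` polynomial in `w, w', p, q`
and their derivatives; clearing `W` turns the claim into a polynomial identity.
-/

theorem hasDerivAt_wronskian {w w' wt wt' : ℝ → ℝ} {w'' wt'' p q s : ℝ}
    (hw : HasDerivAt w (w' s) s) (hw' : HasDerivAt w' w'' s)
    (hwt : HasDerivAt wt (wt' s) s) (hwt' : HasDerivAt wt' wt'' s)
    (hODEw : w'' + p * w' s + q * w s = 0) (hODEwt : wt'' + p * wt' s + q * wt s = 0) :
    HasDerivAt (fun u => wt' u * w u - w' u * wt u)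
      (-p * (wt' s * w s - w' s * wt s)) s := by
  refine ((hwt'.fun_mul hw).fun_sub (hw'.fun_mul hwt)).congr_deriv ?_
  linear_combination w s * hODEwt - wt s * hODEw

theorem HasDerivAt.div_pow_of_hasDerivAt_neg_mul {N W : ℝ → ℝ} {N' p t : ℝ} (k : ℕ)
    (hN : HasDerivAt N N' t) (hW : HasDerivAt W (-p * W t) t) (hW0 : W t ≠ 0) :
    HasDerivAt (fun u => N u / W u ^ k) ((N' + k * p * N t) / W t ^ k) t := by
  refine (hN.fun_div (hW.fun_pow k) (pow_ne_zero k hW0)).congr_deriv ?_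
  rcases k with _ | k
  · simp
  · simp only [add_tsub_cancel_right, pow_succ]
    field_simp
    ring

theorem eq_of_hasDerivAt_of_eqOn_div_pow {I : Set ℝ} (hI : IsOpen I)
    {g dg N N' W p : ℝ → ℝ} (k : ℕ)
    (hg : ∀ s ∈ I, g s = N s / W s ^ k) (hdg : ∀ s ∈ I, HasDerivAt g (dg s) s)
    (hN : ∀ s ∈ I, HasDerivAt N (N' s) s) (hW : ∀ s ∈ I, HasDerivAt W (-p s * W s) s)
    (hW0 : ∀ s ∈ I, W s ≠ 0) (s : ℝ) (hs : s ∈ I) :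
    dg s = (N' s + k * p s * N s) / W s ^ k :=
  (hdg s hs).unique (((hN s hs).div_pow_of_hasDerivAt_neg_mul k (hW s hs)
    (hW0 s hs)).congr_of_eventuallyEq (Filter.eventually_of_mem (hI.mem_nhds hs) hg))

theorem abel_linearisation_third_invariant_general
    (I : Set ℝ) (hI : IsOpen I)
    (p p' q q' q'' w w' w'' wt wt' wt'' g dg g1 dg1 g2 dg2 : ℝ → ℝ)
    (hp : ∀ s ∈ I, HasDerivAt p (p' s) s)
    (hq : ∀ s ∈ I, HasDerivAt q (q' s) s)
    (hq' : ∀ s ∈ I, HasDerivAt q' (q'' s) s)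
    (hw : ∀ s ∈ I, HasDerivAt w (w' s) s)
    (hw' : ∀ s ∈ I, HasDerivAt w' (w'' s) s)
    (hwt : ∀ s ∈ I, HasDerivAt wt (wt' s) s)
    (hwt' : ∀ s ∈ I, HasDerivAt wt' (wt'' s) s)
    (hODEw : ∀ s ∈ I, w'' s + p s * w' s + q s * w s = 0)
    (hODEwt : ∀ s ∈ I, wt'' s + p s * wt' s + q s * wt s = 0)
    (hW0 : ∀ s ∈ I, wt' s * w s - w' s * wt s ≠ 0)
    (hg : ∀ s ∈ I, g s = w s * w' s / (wt' s * w s - w' s * wt s))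
    (hdg : ∀ s ∈ I, HasDerivAt g (dg s) s)
    (hg1 : ∀ s ∈ I, g1 s = (w s) ^ 2 / (wt' s * w s - w' s * wt s) * dg s)
    (hdg1 : ∀ s ∈ I, HasDerivAt g1 (dg1 s) s)
    (hg2 : ∀ s ∈ I, g2 s = (w s) ^ 2 / (wt' s * w s - w' s * wt s) * dg1 s)
    (hdg2 : ∀ s ∈ I, HasDerivAt g2 (dg2 s) s) :
    ∀ s ∈ I,
      (w s) ^ 2 / (wt' s * w s - w' s * wt s) * dg2 s
          - 12 * g s * g2 s - 6 * (g1 s) ^ 2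
          + 48 * (g s) ^ 2 * g1 s - 24 * (g s) ^ 4
        = - (q'' s + 2 * p' s * q s + 5 * q' s * p s + 6 * (p s) ^ 2 * q s)
            * (w s) ^ 8 / (wt' s * w s - w' s * wt s) ^ 4 := by
  set W : ℝ → ℝ := fun u => wt' u * w u - w' u * wt u
  have hW : ∀ s ∈ I, HasDerivAt W (-p s * W s) s := fun s hs =>
    hasDerivAt_wronskian (hw s hs) (hw' s hs) (hwt s hs) (hwt' s hs) (hODEw s hs) (hODEwt s hs)
  have hw'' : ∀ s ∈ I, w'' s = -(p s * w' s) - q s * w s := fun s hs => by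
    linear_combination hODEw s hs
  have hdg := eq_of_hasDerivAt_of_eqOn_div_pow hI 1 (W := W)
    (fun s hs => by rw [hg s hs, pow_one]) hdg (fun s hs => (hw s hs).fun_mul (hw' s hs)) hW hW0
  have hg1 : ∀ s ∈ I, g1 s = w s ^ 2 * (w' s ^ 2 - q s * w s ^ 2) / W s ^ 2 := fun s hs => by
    rw [hg1 s hs, hdg s hs, hw'' s hs]
    field_simp [hW0 s hs]
    ring
  have hdg1 := eq_of_hasDerivAt_of_eqOn_div_pow hI 2 hg1 hdg1
    (fun s hs => ((hw s hs).fun_pow 2).fun_mul (((hw' s hs).fun_pow 2).fun_sub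
      ((hq s hs).fun_mul ((hw s hs).fun_pow 2)))) hW hW0
  have hg2 : ∀ s ∈ I, g2 s = (2 * w s ^ 3 * w' s ^ 3 - 6 * q s * w s ^ 5 * w' s
      - q' s * w s ^ 6 - 2 * p s * q s * w s ^ 6) / W s ^ 3 := fun s hs => by
    rw [hg2 s hs, hdg1 s hs, hw'' s hs]
    field_simp [hW0 s hs]
    ring
  have hdg2 := eq_of_hasDerivAt_of_eqOn_div_pow hI 3 hg2 hdg2
    (fun s hs => (((((hw s hs).fun_pow 3).const_mul 2).fun_mul ((hw' s hs).fun_pow 3)).fun_sub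
      ((((hq s hs).const_mul 6).fun_mul ((hw s hs).fun_pow 5)).fun_mul (hw' s hs))).fun_sub
      ((hq' s hs).fun_mul ((hw s hs).fun_pow 6)) |>.fun_sub
      ((((hp s hs).const_mul 2).fun_mul (hq s hs)).fun_mul ((hw s hs).fun_pow 6))) hW hW0
  intro s hs
  have hWs := hW0 s hs
  rw [hdg2 s hs, hg s hs, hg1 s hs, hg2 s hs, hw'' s hs]
  dsimp only [W]
  field_simp
  ring

/-- with `g = w w'/W`, `z = w̃/w`, and `d/dz = (w²/W)·d/ds`,
one has `g''' − 12 g g'' − 6 (g')² + 48 g² g' − 24 g⁴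
       = −(q'' + 2 p' q + 5 q' p + 6 p² q) w⁸/W⁴`. -/
theorem abel_linearisation_third_invariant
    (I : Set ℝ) (hI : IsOpen I)
    (p p' q q' q'' w w' w'' wt wt' wt'' g dg g1 dg1 g2 dg2 : ℝ → ℝ)
    (hp : ∀ s ∈ I, HasDerivAt p (p' s) s)
    (hq : ∀ s ∈ I, HasDerivAt q (q' s) s)
    (hq' : ∀ s ∈ I, HasDerivAt q' (q'' s) s)
    (hw : ∀ s ∈ I, HasDerivAt w (w' s) s)
    (hw' : ∀ s ∈ I, HasDerivAt w' (w'' s) s)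
    (hwt : ∀ s ∈ I, HasDerivAt wt (wt' s) s)
    (hwt' : ∀ s ∈ I, HasDerivAt wt' (wt'' s) s)
    (hODEw : ∀ s ∈ I, w'' s + p s * w' s + q s * w s = 0)
    (hODEwt : ∀ s ∈ I, wt'' s + p s * wt' s + q s * wt s = 0)
    (hw0 : ∀ s ∈ I, w s ≠ 0)
    (hW0 : ∀ s ∈ I, wt' s * w s - w' s * wt s ≠ 0)
    (hg : ∀ s ∈ I, g s = w s * w' s / (wt' s * w s - w' s * wt s))
    (hdg : ∀ s ∈ I, HasDerivAt g (dg s) s)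
    (hg1 : ∀ s ∈ I, g1 s = (w s) ^ 2 / (wt' s * w s - w' s * wt s) * dg s)
    (hdg1 : ∀ s ∈ I, HasDerivAt g1 (dg1 s) s)
    (hg2 : ∀ s ∈ I, g2 s = (w s) ^ 2 / (wt' s * w s - w' s * wt s) * dg1 s)
    (hdg2 : ∀ s ∈ I, HasDerivAt g2 (dg2 s) s) :
    ∀ s ∈ I,
      (w s) ^ 2 / (wt' s * w s - w' s * wt s) * dg2 s
          - 12 * g s * g2 s - 6 * (g1 s) ^ 2
          + 48 * (g s) ^ 2 * g1 s - 24 * (g s) ^ 4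
        = - (q'' s + 2 * p' s * q s + 5 * q' s * p s + 6 * (p s) ^ 2 * q s)
            * (w s) ^ 8 / (wt' s * w s - w' s * wt s) ^ 4 :=
  abel_linearisation_third_invariant_general I hI p p' q q' q'' w w' w'' wt wt' wt'' g dg g1 dg1 g2
    dg2 hp hq hq' hw hw' hwt hwt' hODEw hODEwt hW0 hg hdg hg1 hdg1 hg2 hdg2
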